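/- Every maximal saturated chain in the Hochschild lattice of size n ≥ 1 from the minimum 0^n to the maximum 1·2^{n-1} has length at most 2n − 1, and there exists a saturated chain of length exactly 2n − 1. -/

import Mathlib

def IsTriword {n : ℕ} (u : Fin n → Fin 3) : Prop :=
  (∀ i : Fin n, (i : ℕ) = 0 → u i ≠ 2) ∧
  ∀ i j : Fin n, i < j → u i = 0 → u j ≠ 1

abbrev Triword (n : ℕ) := {u : Fin n → Fin 3 // IsTriword u}

namespace HochAux

/-- value of coordinate `j` after `k` steps -/
def v (k j : ℕ) : ℕ := if j = 0 then min 1 k else min 2 (k + 1 - 2 * j)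

lemma v_le (k j : ℕ) : v k j ≤ 2 := by unfold v; split <;> omega

def f (n k : ℕ) : Fin n → Fin 3 := fun j => ⟨v k j, Nat.lt_succ_of_le (v_le k j)⟩

lemma f_triword (n k : ℕ) : IsTriword (f n k) := by
  constructor
  · intro i hi h
    have := congrArg Fin.val h
    simp only [f, v, hi, if_true] at this
    simp at this
    omega
  · intro i j hij h0 h1
    have h0' := congrArg Fin.val h0
    have h1' := congrArg Fin.val h1
    have hij' : (i : ℕ) < j := hij
    simp only [f, v] at h0' h1'
    rcases eq_or_ne (i : ℕ) 0 with hi | hi <;>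
      rcases eq_or_ne (j : ℕ) 0 with hj | hj <;>
        simp [hi, hj] at h0' h1' <;> omega

lemma cover_of_step {n : ℕ} (a b : Triword n) (m : Fin n)
    (hm : (b.1 m : ℕ) = (a.1 m : ℕ) + 1)
    (hj : ∀ j : Fin n, j ≠ m → b.1 j = a.1 j) : a ⋖ b := by
  have hle : a.1 ≤ b.1 := by
    intro j
    rcases eq_or_ne j m with rfl | h
    · exact Fin.le_def.mpr (by omega)
    · exact le_of_eq (hj j h).symm
  have hlt : a < b := by
    refine lt_iff_le_and_ne.mpr ⟨hle, ?_⟩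
    intro h
    have := congrArg (fun x => (x.1 m : ℕ)) h
    omega
  refine ⟨hlt, ?_⟩
  intro c hac hcb
  have hac' : a.1 ≤ c.1 := le_of_lt hac
  have hcb' : c.1 ≤ b.1 := le_of_lt hcb
  have heq : ∀ j : Fin n, j ≠ m → c.1 j = a.1 j := fun j h =>
    le_antisymm ((hj j h) ▸ hcb' j) (hac' j)
  rcases eq_or_ne (c.1 m) (a.1 m) with h | h
  · exact absurd (Subtype.ext (funext fun j => by
      rcases eq_or_ne j m with rfl | hne
      · exact h
      · exact heq j hne)) (ne_of_gt hac)
  · have : c.1 m = b.1 m := by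
      have h1 : (a.1 m : ℕ) ≤ (c.1 m : ℕ) := hac' m
      have h2 : (c.1 m : ℕ) ≤ (b.1 m : ℕ) := hcb' m
      have h3 : (c.1 m : ℕ) ≠ (a.1 m : ℕ) := fun he => h (Fin.ext he)
      exact Fin.ext (by omega)
    exact absurd (Subtype.ext (funext fun j => by
      rcases eq_or_ne j m with rfl | hne
      · exact this
      · exact (heq j hne).trans ((hj j hne).symm))) (ne_of_lt hcb)

def W {n : ℕ} (u : Fin n → Fin 3) : ℕ := ∑ j, (u j : ℕ)

lemma W_lt {n : ℕ} {a b : Triword n} (h : a < b) : W a.1 < W b.1 := by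
  have hle : a.1 ≤ b.1 := le_of_lt h
  have hne : a.1 ≠ b.1 := fun he => (ne_of_lt h) (Subtype.ext he)
  have : ∃ j, a.1 j ≠ b.1 j := by
    by_contra h'; push_neg at h'; exact hne (funext h')
  obtain ⟨j, hj⟩ := this
  refine Finset.sum_lt_sum (fun i _ => hle i) ⟨j, Finset.mem_univ j, ?_⟩
  exact lt_of_le_of_ne (hle j) fun he => hj (Fin.ext he)

lemma v_step_eq (k j : ℕ) (hj : j ≠ (k + 1) / 2) : v (k + 1) j = v k j := by
  unfold v
  rcases eq_or_ne j 0 with h | h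
  · simp only [h, reduceIte]; omega
  · simp only [if_neg h]; omega

lemma v_step_succ (k : ℕ) : v (k + 1) ((k + 1) / 2) = v k ((k + 1) / 2) + 1 := by
  unfold v
  rcases eq_or_ne ((k + 1) / 2) 0 with h | h
  · simp only [h, reduceIte]; omega
  · simp only [if_neg h]; omega

end HochAux

open HochAux

/-- Every saturated chain in the Hochschild lattice of size `n ≥ 1` from the
minimum `0^n` to the maximum `1·2^(n-1)` has length at most `2n - 1`, and there
is a saturated chain of length exactly `2n - 1`. -/
theorem maximal_chain_length (n : ℕ) (hn : 1 ≤ n) :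
    (∀ (r : ℕ) (c : Fin (r + 1) → Triword n),
        (c 0).1 = (fun _ : Fin n => (0 : Fin 3)) →
        (c (Fin.last r)).1 = (fun i : Fin n => if (i : ℕ) = 0 then (1 : Fin 3) else 2) →
        (∀ i : Fin r, c i.castSucc ⋖ c i.succ) →
        r ≤ 2 * n - 1) ∧
    (∃ c : Fin (2 * n - 1 + 1) → Triword n,
        (c 0).1 = (fun _ : Fin n => (0 : Fin 3)) ∧
        (c (Fin.last (2 * n - 1))).1 = (fun i : Fin n => if (i : ℕ) = 0 then (1 : Fin 3) else 2) ∧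
        ∀ i : Fin (2 * n - 1), c i.castSucc ⋖ c i.succ) := by
  obtain ⟨m, rfl⟩ : ∃ m, n = m + 1 := ⟨n - 1, by omega⟩
  have hWmax : W (fun i : Fin (m + 1) => if (i : ℕ) = 0 then (1 : Fin 3) else 2)
      = 2 * (m + 1) - 1 := by
    unfold W
    rw [Fin.sum_univ_succ]
    simp [Fin.val_succ]
    ring_nf
    omega
  constructor
  · intro r c h0 hlast hcov
    have key : ∀ i : Fin (r + 1), (i : ℕ) ≤ W (c i).1 := by
      intro i
      induction i using Fin.induction with
      | zero => simp
      | succ i ih =>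
        have := W_lt (hcov i).1
        simp only [Fin.coe_castSucc] at ih
        simp only [Fin.val_succ]
        omega
    have := key (Fin.last r)
    rw [hlast, hWmax] at this
    simpa using this
  · refine ⟨fun k => ⟨f (m + 1) k.1, f_triword _ _⟩, ?_, ?_, ?_⟩
    · funext j
      apply Fin.ext
      show v 0 (j : ℕ) = 0
      unfold v
      rcases eq_or_ne (j : ℕ) 0 with h | h
      · simp [h]
      · simp only [if_neg h]; omega
    · funext j
      apply Fin.ext
      show v (2 * (m + 1) - 1) (j : ℕ) = _
      have hj := j.isLt
      unfold v
      rcases eq_or_ne (j : ℕ) 0 with h | h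
      · simp only [h, reduceIte]
        show min 1 (2 * (m + 1) - 1) = ((1 : Fin 3) : ℕ)
        simp; omega
      · simp only [if_neg h]
        show min 2 (2 * (m + 1) - 1 + 1 - 2 * (j : ℕ)) = ((2 : Fin 3) : ℕ)
        simp; omega
    · intro i
      have hk : (i : ℕ) < 2 * (m + 1) - 1 := i.isLt
      have hmlt : ((i : ℕ) + 1) / 2 < m + 1 := by omega
      refine cover_of_step _ _ ⟨((i : ℕ) + 1) / 2, hmlt⟩ ?_ ?_
      · show v ((i.succ : ℕ)) _ = v ((i.castSucc : ℕ)) _ + 1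
        rw [Fin.val_succ, Fin.coe_castSucc]
        exact v_step_succ _
      · intro j hj
        apply Fin.ext
        show v ((i.succ : ℕ)) (j : ℕ) = v ((i.castSucc : ℕ)) (j : ℕ)
        rw [Fin.val_succ, Fin.coe_castSucc]
        exact v_step_eq _ _ (fun h => hj (Fin.ext h))
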